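/- arXiv:2207.07438 — 3 statements merged into one kernel-verified Lean document; each statement's English description precedes it below -/
import Mathlib

section
/- Let M be a maximal matching in a graph G with |M| ≤ (1/2 + c)·μ(G) for some real c. Then there exist at least (1/2 − 3c)·μ(G) vertex-disjoint augmenting paths of length three with respect to M. -/
variable {V : Type*}

/-- A matching of `G`: a finset of edges of `G` that are pairwise vertex-disjoint. -/
def IsMatching (G : SimpleGraph V) (M : Finset (Sym2 V)) : Prop :=
  (∀ e ∈ M, e ∈ G.edgeSet) ∧
    ∀ e ∈ M, ∀ f ∈ M, e ≠ f → ∀ v : V, v ∈ e → v ∉ f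

/-- A vertex is matched by `M` if it belongs to some edge of `M`. -/
def Matched (M : Finset (Sym2 V)) (v : V) : Prop := ∃ e ∈ M, v ∈ e

/-- A maximal matching: every edge of `G` has a matched endpoint. -/
def IsMaximalMatching (G : SimpleGraph V) (M : Finset (Sym2 V)) : Prop :=
  IsMatching G M ∧ ∀ e ∈ G.edgeSet, ∃ v, v ∈ e ∧ Matched M v

/-- μ(G): the maximum matching size of `G`. -/
noncomputable def matchNum (G : SimpleGraph V) : ℕ :=
  sSup {n | ∃ M : Finset (Sym2 V), IsMatching G M ∧ M.card = n}

/-- The subgraph of `G` induced by the vertex set `S` (on the same vertex type). -/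
def restrictVerts (G : SimpleGraph V) (S : Set V) : SimpleGraph V where
  Adj u v := G.Adj u v ∧ u ∈ S ∧ v ∈ S
  symm := ⟨fun u v h => ⟨h.1.symm, h.2.2, h.2.1⟩⟩
  loopless := ⟨fun u h => G.loopless.irrefl u h.1⟩

/-- `M` is an ε-approximately maximal matching of `G`: it is maximal in a subgraph of `G`
obtained by deleting at most `ε * μ(G)` vertices. -/
def IsAMM (G : SimpleGraph V) (ε : ℝ) (M : Finset (Sym2 V)) : Prop :=
  IsMatching G M ∧ ∃ D : Finset V, (D.card : ℝ) ≤ ε * matchNum G ∧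
    IsMaximalMatching (restrictVerts G ((↑D : Set V)ᶜ)) M

/-- The four vertices of a (candidate) length-three augmenting path `u' - u - v - v'`,
encoded as the tuple `(u', u, v, v')`. -/
def pathVerts [DecidableEq V] (p : V × V × V × V) : Finset V :=
  {p.1, p.2.1, p.2.2.1, p.2.2.2}

/-- `p = (u', u, v, v')` is a length-three augmenting path for the matching `M` in `G`:
`u'` and `v'` are unmatched and distinct, `(u,v) ∈ M`, and the outer edges are
edges of `G` outside `M`. -/
def IsAugPath3 (G : SimpleGraph V) (M : Finset (Sym2 V)) (p : V × V × V × V) : Prop :=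
  p.1 ≠ p.2.2.2 ∧ ¬ Matched M p.1 ∧ ¬ Matched M p.2.2.2 ∧
  s(p.2.1, p.2.2.1) ∈ M ∧
  s(p.1, p.2.1) ∈ G.edgeSet ∧ s(p.1, p.2.1) ∉ M ∧
  s(p.2.2.1, p.2.2.2) ∈ G.edgeSet ∧ s(p.2.2.1, p.2.2.2) ∉ M

/-- The paths in `P` are pairwise vertex-disjoint. -/
def PairwiseDisjointPaths [DecidableEq V] (P : Finset (V × V × V × V)) : Prop :=
  ∀ p ∈ P, ∀ q ∈ P, p ≠ q → Disjoint (pathVerts p) (pathVerts q)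

/-!
Fix a maximum matching `W`, and call an edge of `M` augmentable if the `W`-partners of both
its endpoints exist and are unmatched by `M`; such an edge is the middle edge of a length-three
augmenting path, and the paths of distinct augmentable edges are vertex-disjoint.

To count them, write `V(N)` for the set of vertices matched by `N`; then
`2μ = |V(W)| ≤ |V(W) \ V(M)| + 2|M|`. By maximality of `M`, the `W`-partner of a vertex of
`V(W) \ V(M)` is matched by `M` and has an `M`-free `W`-partner, so `partner W` injects
`V(W) \ V(M)` into the `M`-matched vertices with an `M`-free `W`-partner. An edge of `M` contains
two such vertices only if it is augmentable, whence `2μ ≤ 3|M| + #augmentable`, and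
`|M| ≤ (1/2 + c)μ` gives `#augmentable ≥ (1/2 - 3c)μ`.
-/

open Finset

lemma Sym2.mk_out {α : Type*} (e : Sym2 α) : s(e.out.1, e.out.2) = e := by
  rw [Sym2.mk, e.out_eq]

lemma Sym2.card_filter_toFinset_le {α : Type*} [DecidableEq α] (e : Sym2 α) (p : α → Prop)
    [DecidablePred p] [Decidable (∀ x ∈ e, p x)] :
    #(e.toFinset.filter p) ≤ 1 + if ∀ x ∈ e, p x then 1 else 0 := by
  have hcard : #e.toFinset ≤ 2 := by rw [Sym2.card_toFinset]; split_ifs <;> omega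
  split_ifs with hall
  · exact (card_filter_le _ _).trans hcard
  · push Not at hall
    obtain ⟨x, hxe, hpx⟩ := hall
    have hsub : e.toFinset.filter p ⊆ e.toFinset.erase x := fun y hy => by
      rw [mem_filter] at hy
      exact mem_erase.mpr ⟨fun h => hpx (h ▸ hy.2), hy.1⟩
    have := card_le_card hsub
    rw [card_erase_of_mem (Sym2.mem_toFinset.mpr hxe)] at this
    omega

def VertexDisjoint (N : Finset (Sym2 V)) : Prop :=
  ∀ e ∈ N, ∀ f ∈ N, e ≠ f → ∀ v : V, v ∈ e → v ∉ f

lemma VertexDisjoint.eq_of_mem {N : Finset (Sym2 V)} (hN : VertexDisjoint N) {e f : Sym2 V}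
    {v : V} (he : e ∈ N) (hf : f ∈ N) (hve : v ∈ e) (hvf : v ∈ f) : e = f :=
  by_contra fun hne => hN e he f hf hne v hve hvf

lemma IsMatching.not_isDiag {G : SimpleGraph V} {N : Finset (Sym2 V)} (hN : IsMatching G N)
    {e : Sym2 V} (he : e ∈ N) : ¬ e.IsDiag :=
  G.not_isDiag_of_mem_edgeSet (hN.1 e he)

lemma exists_isMatching_card_eq_matchNum [Fintype V] (G : SimpleGraph V) :
    ∃ W, IsMatching G W ∧ #W = matchNum G := by
  classical
  have hne : {n | ∃ N : Finset (Sym2 V), IsMatching G N ∧ #N = n}.Nonempty :=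
    ⟨0, ∅, ⟨by simp, by simp⟩, rfl⟩
  have hbdd : BddAbove {n | ∃ N : Finset (Sym2 V), IsMatching G N ∧ #N = n} :=
    ⟨Fintype.card (Sym2 V), by rintro _ ⟨N, -, rfl⟩; exact card_le_univ N⟩
  exact Nat.sSup_mem hne hbdd

section Partner

variable {N : Finset (Sym2 V)} {v : V}

open Classical in
noncomputable def partner (N : Finset (Sym2 V)) (v : V) : V :=
  if h : Matched N v then Sym2.Mem.other h.choose_spec.2 else v

lemma mk_partner_mem (h : Matched N v) : s(v, partner N v) ∈ N := by
  rw [partner, dif_pos h, Sym2.other_spec]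
  exact h.choose_spec.1

lemma matched_partner (h : Matched N v) : Matched N (partner N v) :=
  ⟨_, mk_partner_mem h, Sym2.mem_mk_right _ _⟩

lemma partner_eq_of_mk_mem (hN : VertexDisjoint N) {a b : V} (h : s(a, b) ∈ N) :
    partner N a = b := by
  have ha : Matched N a := ⟨_, h, Sym2.mem_mk_left a b⟩
  exact Sym2.congr_right.mp (hN.eq_of_mem (mk_partner_mem ha) h
    (Sym2.mem_mk_left _ _) (Sym2.mem_mk_left _ _))

lemma partner_partner (hN : VertexDisjoint N) (h : Matched N v) :
    partner N (partner N v) = v :=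
  partner_eq_of_mk_mem hN (Sym2.eq_swap ▸ mk_partner_mem h)

end Partner

section Augmenting

variable {G : SimpleGraph V} {M W : Finset (Sym2 V)}

def HasFreePartner (M W : Finset (Sym2 V)) (x : V) : Prop :=
  Matched W x ∧ ¬ Matched M (partner W x)

open Classical in
noncomputable def augmentableEdges (M W : Finset (Sym2 V)) : Finset (Sym2 V) :=
  M.filter fun m => ∀ x ∈ m, HasFreePartner M W x

lemma mem_augmentableEdges {m : Sym2 V} :
    m ∈ augmentableEdges M W ↔ m ∈ M ∧ ∀ x ∈ m, HasFreePartner M W x := by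
  classical exact mem_filter

lemma IsMaximalMatching.matched_partner (hM : IsMaximalMatching G M)
    (hW : IsMatching G W) {v : V} (hvW : Matched W v) (hvM : ¬ Matched M v) :
    Matched M (partner W v) := by
  obtain ⟨x, hx, hxM⟩ := hM.2 _ (hW.1 _ (mk_partner_mem hvW))
  rcases Sym2.mem_iff.mp hx with rfl | rfl
  · exact absurd hxM hvM
  · exact hxM

lemma isAugPath3_of_hasFreePartner (hM : IsMatching G M) (hW : IsMatching G W) {a b : V}
    (hab : s(a, b) ∈ M) (ha : HasFreePartner M W a) (hb : HasFreePartner M W b) :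
    IsAugPath3 G M (partner W a, a, b, partner W b) := by
  have hne : partner W a ≠ partner W b := fun h => hM.not_isDiag hab <| by
    rw [Sym2.mk_isDiag_iff, ← partner_partner hW.2 ha.1, h, partner_partner hW.2 hb.1]
  have hna : s(partner W a, a) ∉ M := fun h => ha.2 ⟨_, h, Sym2.mem_mk_left _ _⟩
  have hnb : s(b, partner W b) ∉ M := fun h => hb.2 ⟨_, h, Sym2.mem_mk_right _ _⟩
  exact ⟨hne, ha.2, hb.2, hab, Sym2.eq_swap ▸ hW.1 _ (mk_partner_mem ha.1), hna,
    hW.1 _ (mk_partner_mem hb.1), hnb⟩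

noncomputable def augPath (W : Finset (Sym2 V)) (m : Sym2 V) : V × V × V × V :=
  (partner W m.out.1, m.out.1, m.out.2, partner W m.out.2)

lemma augPath_injective (W : Finset (Sym2 V)) : Function.Injective (augPath W) := by
  intro m m' h
  have hout : m.out = m'.out := Prod.ext (congrArg (·.2.1) h) (congrArg (·.2.2.1) h)
  rw [← Sym2.mk_out m, ← Sym2.mk_out m', hout]

lemma isAugPath3_augPath (hM : IsMatching G M) (hW : IsMatching G W) {m : Sym2 V}
    (hm : m ∈ augmentableEdges M W) : IsAugPath3 G M (augPath W m) :=
  isAugPath3_of_hasFreePartner hM hW ((Sym2.mk_out m).symm ▸ (mem_augmentableEdges.mp hm).1)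
    ((mem_augmentableEdges.mp hm).2 _ m.out_fst_mem)
    ((mem_augmentableEdges.mp hm).2 _ m.out_snd_mem)

variable [DecidableEq V]

def matchedVerts (N : Finset (Sym2 V)) : Finset V := N.biUnion Sym2.toFinset

lemma mem_matchedVerts {N : Finset (Sym2 V)} {v : V} : v ∈ matchedVerts N ↔ Matched N v := by
  simp only [matchedVerts, mem_biUnion, Sym2.mem_toFinset, Matched]

lemma IsMatching.card_matchedVerts {N : Finset (Sym2 V)} (hN : IsMatching G N) :
    #(matchedVerts N) = 2 * #N := by
  rw [matchedVerts, card_biUnion, sum_congr rfl fun e he =>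
    Sym2.card_toFinset_of_not_isDiag e (hN.not_isDiag he), sum_const, smul_eq_mul, mul_comm]
  exact fun e he f hf hne => disjoint_left.mpr fun v hve hvf =>
    hN.2 e he f hf hne v (Sym2.mem_toFinset.mp hve) (Sym2.mem_toFinset.mp hvf)

open Classical in
noncomputable def freePartnerVerts (M W : Finset (Sym2 V)) : Finset V :=
  (matchedVerts M).filter (HasFreePartner M W)

lemma card_matchedVerts_sdiff_le (hM : IsMaximalMatching G M) (hW : IsMatching G W) :
    #(matchedVerts W \ matchedVerts M) ≤ #(freePartnerVerts M W) := by
  refine card_le_card_of_injOn (partner W) (fun v hv => ?_) (fun v hv v' hv' h => ?_)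
  · simp only [mem_coe, mem_sdiff, mem_matchedVerts] at hv
    simp only [mem_coe, freePartnerVerts, mem_filter, mem_matchedVerts, HasFreePartner]
    exact ⟨hM.matched_partner hW hv.1 hv.2, matched_partner hv.1,
      (partner_partner hW.2 hv.1).symm ▸ hv.2⟩
  · simp only [mem_coe, mem_sdiff, mem_matchedVerts] at hv hv'
    rw [← partner_partner hW.2 hv.1, h, partner_partner hW.2 hv'.1]

open Classical in
lemma card_freePartnerVerts_le : #(freePartnerVerts M W) ≤ #M + #(augmentableEdges M W) := by
  have hsub : freePartnerVerts M W ⊆ M.biUnion fun m => m.toFinset.filter (HasFreePartner M W) :=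
    fun v hv => by
      simp only [freePartnerVerts, mem_filter, mem_matchedVerts] at hv
      obtain ⟨⟨m, hm, hvm⟩, hv⟩ := hv
      exact mem_biUnion.mpr ⟨m, hm, mem_filter.mpr ⟨Sym2.mem_toFinset.mpr hvm, hv⟩⟩
  calc #(freePartnerVerts M W)
      ≤ ∑ m ∈ M, #(m.toFinset.filter (HasFreePartner M W)) :=
        (card_le_card hsub).trans card_biUnion_le
    _ ≤ ∑ m ∈ M, (1 + if ∀ x ∈ m, HasFreePartner M W x then 1 else 0) :=
        sum_le_sum fun m _ => m.card_filter_toFinset_le _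
    _ = #M + #(augmentableEdges M W) := by
        rw [sum_add_distrib, card_eq_sum_ones, augmentableEdges, card_filter]

lemma two_mul_card_le_three_mul_card_add_card_augmentableEdges (hM : IsMaximalMatching G M)
    (hW : IsMatching G W) :
    2 * #W ≤ 3 * #M + #(augmentableEdges M W) :=
  calc 2 * #W = #(matchedVerts W) := hW.card_matchedVerts.symm
    _ ≤ #(matchedVerts W \ matchedVerts M) + #(matchedVerts M) := card_le_card_sdiff_add_card
    _ ≤ #M + #(augmentableEdges M W) + 2 * #M :=
        add_le_add ((card_matchedVerts_sdiff_le hM hW).trans card_freePartnerVerts_le)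
          hM.1.card_matchedVerts.le
    _ = 3 * #M + #(augmentableEdges M W) := by ring

lemma mem_or_partner_mem_of_mem_pathVerts (hW : VertexDisjoint W) {m : Sym2 V}
    (hm : m ∈ augmentableEdges M W) {x : V} (hx : x ∈ pathVerts (augPath W m)) :
    x ∈ m ∨ ¬ Matched M x ∧ partner W x ∈ m := by
  have hfree {y : V} (hy : y ∈ m) :
      ¬ Matched M (partner W y) ∧ partner W (partner W y) ∈ m :=
    ⟨((mem_augmentableEdges.mp hm).2 _ hy).2,
      (partner_partner hW ((mem_augmentableEdges.mp hm).2 _ hy).1).symm ▸ hy⟩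
  simp only [pathVerts, augPath, mem_insert, mem_singleton] at hx
  rcases hx with rfl | rfl | rfl | rfl
  · exact .inr (hfree m.out_fst_mem)
  · exact .inl m.out_fst_mem
  · exact .inl m.out_snd_mem
  · exact .inr (hfree m.out_snd_mem)

lemma disjoint_pathVerts_augPath (hM : VertexDisjoint M) (hW : VertexDisjoint W)
    {m m' : Sym2 V} (hm : m ∈ augmentableEdges M W) (hm' : m' ∈ augmentableEdges M W)
    (hne : m ≠ m') : Disjoint (pathVerts (augPath W m)) (pathVerts (augPath W m')) := by
  have hmM := (mem_augmentableEdges.mp hm).1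
  have hmM' := (mem_augmentableEdges.mp hm').1
  refine disjoint_left.mpr fun x hx hx' => hne ?_
  rcases mem_or_partner_mem_of_mem_pathVerts hW hm hx with hxm | ⟨hxM, hxm⟩ <;>
    rcases mem_or_partner_mem_of_mem_pathVerts hW hm' hx' with hxm' | ⟨hxM', hxm'⟩
  · exact hM.eq_of_mem hmM hmM' hxm hxm'
  · exact absurd ⟨m, hmM, hxm⟩ hxM'
  · exact absurd ⟨m', hmM', hxm'⟩ hxM
  · exact hM.eq_of_mem hmM hmM' hxm hxm'

lemma pairwiseDisjointPaths_image_augPath (hM : VertexDisjoint M) (hW : VertexDisjoint W) :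
    PairwiseDisjointPaths ((augmentableEdges M W).image (augPath W)) := by
  simp only [PairwiseDisjointPaths, mem_image]
  rintro _ ⟨m, hm, rfl⟩ _ ⟨m', hm', rfl⟩ hne
  exact disjoint_pathVerts_augPath hM hW hm hm' (ne_of_apply_ne _ hne)

end Augmenting

theorem small_maximal_matching_many_aug_paths [Fintype V] [DecidableEq V]
    (G : SimpleGraph V) (M : Finset (Sym2 V)) (c : ℝ)
    (hmax : IsMaximalMatching G M)
    (hsize : (M.card : ℝ) ≤ (1/2 + c) * matchNum G) :
    ∃ P : Finset (V × V × V × V),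
      (∀ p ∈ P, IsAugPath3 G M p) ∧ PairwiseDisjointPaths P ∧
      (1/2 - 3*c) * matchNum G ≤ (P.card : ℝ) := by
  obtain ⟨W, hW, hWcard⟩ := exists_isMatching_card_eq_matchNum G
  refine ⟨(augmentableEdges M W).image (augPath W), ?_,
    pairwiseDisjointPaths_image_augPath hmax.1.2 hW.2, ?_⟩
  · simp only [mem_image]
    rintro _ ⟨m, hm, rfl⟩
    exact isAugPath3_augPath hmax.1 hW hm
  · have hcount : (2 * matchNum G : ℝ) ≤ 3 * #M + #(augmentableEdges M W) := by
      exact_mod_cast hWcard ▸ two_mul_card_le_three_mul_card_add_card_augmentableEdges hmax hW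
    rw [card_image_of_injective _ (augPath_injective W)]
    linarith
end

section
/- Let 𝒫 be a set of 3-augmenting paths with respect to a matching M₁ in a graph, such that the two outer (M₁-unmatched) endpoints of every path lie on opposite sides of a fixed bipartition of the unmatched vertices, each M₁-matched vertex belongs to at most one path in 𝒫, and each unmatched vertex belongs to at most b paths in 𝒫. Then 𝒫 contains a subset 𝒫' of fully vertex-disjoint paths with |𝒫'| ≥ |𝒫|/b. -/
/-!
Send each path `u' - u - v - v'` to the edge between its outer endpoints, oriented from the side
`L` to the other side. The outer endpoints are the only `M₁`-unmatched vertices of a path, so this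
bipartite multigraph has maximum degree at most `b`, and paths whose edges form a matching in it
are vertex-disjoint, because no `M₁`-matched vertex is shared by two paths anyway.

A bipartite multigraph with `m` edges and maximum degree `b` has a matching with at least `m / b`
edges: by Hall's theorem with deficiency, a matching saturates all left vertices `A` but
`max_S (#S - #N(S))`, and for a maximally deficient `S` the `#A - #S + #N(S)` vertices of
`(A \ S) ∪ N(S)` meet every edge, each of them at most `b` edges.
-/

variable {V : Type*}

open Finset

theorem Finset.exists_injective_of_card_le_card_biUnion_add {ι α : Type*} [Fintype ι]
    [DecidableEq α] (t : ι → Finset α) (d : ℕ) (h : ∀ S : Finset ι, #S ≤ #(S.biUnion t) + d) :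
    ∃ s : Finset ι, Fintype.card ι ≤ #s + d ∧
      ∃ f : s → α, Function.Injective f ∧ ∀ i : s, f i ∈ t i := by
  classical
  -- `d` dummy vertices adjacent to everything restore Hall's condition
  have hall : ∀ S : Finset ι,
      #S ≤ #(S.biUnion fun i => (t i).disjSum (univ : Finset (Fin d))) := by
    intro S
    obtain rfl | ⟨i₀, hi₀⟩ := S.eq_empty_or_nonempty
    · simp
    calc #S ≤ #((S.biUnion t).disjSum (univ : Finset (Fin d))) := by simpa using h S
      _ ≤ _ := by
        refine card_le_card fun x hx => ?_
        rcases x with a | j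
        · obtain ⟨i, hi, ha⟩ := mem_biUnion.1 (inl_mem_disjSum.1 hx)
          exact mem_biUnion.2 ⟨i, hi, inl_mem_disjSum.2 ha⟩
        · exact mem_biUnion.2 ⟨i₀, hi₀, inr_mem_disjSum.2 (mem_univ j)⟩
  obtain ⟨g, hg, hgt⟩ := (all_card_le_biUnion_card_iff_exists_injective _).1 hall
  let s : Finset ι := {i | (g i).isLeft}
  have hsc : #sᶜ ≤ d := by
    calc #sᶜ ≤ #((univ : Finset (Fin d)).map .inr) := by
          refine card_le_card_of_injOn g (fun i hi => ?_) hg.injOn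
          obtain ⟨j, hj⟩ := Sum.isRight_iff.1 (by simpa [s] using hi)
          simp [hj]
      _ = d := by simp
  have hleft : ∀ i : s, ∃ a, g i = .inl a := fun i => Sum.isLeft_iff.1 (mem_filter.1 i.2).2
  choose f hf using hleft
  refine ⟨s, by have := card_add_card_compl s; omega, f, ?_, ?_⟩
  · intro i j hij
    exact Subtype.ext (hg (by rw [hf, hf, hij]))
  · intro i
    simpa [hf i] using hgt i

theorem Finset.card_le_mul_card_add_card_of_cover {E W : Type*} [DecidableEq W]
    {P : Finset E} {l r : E → W} {b : ℕ} (hl : ∀ w, #{p ∈ P | l p = w} ≤ b)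
    (hr : ∀ w, #{p ∈ P | r p = w} ≤ b) {C D : Finset W} (hCD : ∀ p ∈ P, l p ∈ C ∨ r p ∈ D) :
    #P ≤ b * (#C + #D) := by
  classical
  have hC : #{p ∈ P | l p ∈ C} ≤ b * #C :=
    card_le_mul_card_image_of_maps_to (fun p hp => (mem_filter.1 hp).2) b
      fun w _ => (card_le_card (filter_subset_filter _ (filter_subset _ P))).trans (hl w)
  have hD : #{p ∈ P | r p ∈ D} ≤ b * #D :=
    card_le_mul_card_image_of_maps_to (fun p hp => (mem_filter.1 hp).2) b
      fun w _ => (card_le_card (filter_subset_filter _ (filter_subset _ P))).trans (hr w)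
  calc #P ≤ #({p ∈ P | l p ∈ C} ∪ {p ∈ P | r p ∈ D}) := by
        rw [← filter_or, filter_true_of_mem hCD]
    _ ≤ b * #C + b * #D := (card_union_le _ _).trans (add_le_add hC hD)
    _ = b * (#C + #D) := (mul_add _ _ _).symm

theorem Finset.exists_subset_injOn_injOn_of_fiber_card_le {E W : Type*} [DecidableEq W]
    (P : Finset E) (l r : E → W) (b : ℕ) (hl : ∀ w, #{p ∈ P | l p = w} ≤ b)
    (hr : ∀ w, #{p ∈ P | r p = w} ≤ b) :
    ∃ P' ⊆ P, Set.InjOn l P' ∧ Set.InjOn r P' ∧ #P ≤ b * #P' := by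
  classical
  let A := P.image l
  let N : A → Finset W := fun w => {p ∈ P | l p = w}.image r
  obtain ⟨S₀, -, hS₀⟩ := exists_max_image (univ : Finset (Finset A))
    (fun S => #S - #(S.biUnion N)) ⟨∅, mem_univ _⟩
  obtain ⟨s, hs, f, hf, hfN⟩ := exists_injective_of_card_le_card_biUnion_add N
    (#S₀ - #(S₀.biUnion N)) fun S => by have := hS₀ S (mem_univ S); omega
  have hcover : #P ≤ b * (#(A \ S₀.map (.subtype _)) + #(S₀.biUnion N)) := by
    refine card_le_mul_card_add_card_of_cover hl hr fun p hp => ?_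
    by_cases hS : l p ∈ S₀.map (.subtype _)
    · obtain ⟨w, hw, hwl⟩ := mem_map.1 hS
      exact .inr (mem_biUnion.2 ⟨w, hw, mem_image_of_mem r (mem_filter.2 ⟨hp, hwl.symm⟩)⟩)
    · exact .inl (mem_sdiff.2 ⟨mem_image_of_mem l hp, hS⟩)
  rw [card_sdiff_of_subset fun x hx => by obtain ⟨w, -, rfl⟩ := mem_map.1 hx; exact w.2,
    card_map] at hcover
  have hedge : ∀ w : s, ∃ p ∈ P, l p = w ∧ r p = f w := by
    intro w
    obtain ⟨p, hp, hpr⟩ := mem_image.1 (hfN w)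
    exact ⟨p, (mem_filter.1 hp).1, (mem_filter.1 hp).2, hpr⟩
  choose e heP hel her using hedge
  have hle : Function.Injective (l ∘ e) := fun v w h =>
    Subtype.ext (Subtype.ext (by simpa only [Function.comp_apply, hel] using h))
  have hre : Function.Injective (r ∘ e) := fun v w h =>
    hf (by simpa only [Function.comp_apply, her] using h)
  have hrange : ((univ.image e : Finset E) : Set E) = Set.range e := by simp
  refine ⟨univ.image e, by simpa [Finset.image_subset_iff] using heP,
    hrange ▸ hle.injOn_range, hrange ▸ hre.injOn_range, ?_⟩
  rw [card_image_of_injective _ hle.of_comp, card_univ, Fintype.card_coe]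
  have : #S₀ ≤ #A := by simpa using card_le_univ S₀
  rw [Fintype.card_coe] at hs
  rcases le_total #S₀ #(S₀.biUnion N) with h | h
  · exact (card_le_mul_card_image P b fun w _ => hl w).trans
      (Nat.mul_le_mul_left b (show #A ≤ #s by omega))
  · exact hcover.trans (Nat.mul_le_mul_left b (by omega))

section AugPaths

variable {G : SimpleGraph V} {M : Finset (Sym2 V)} {p : V × V × V × V}

lemma IsAugPath3.mem_pathVerts_and_not_matched_iff [DecidableEq V] (hp : IsAugPath3 G M p)
    {v : V} : v ∈ pathVerts p ∧ ¬ Matched M v ↔ v = p.1 ∨ v = p.2.2.2 := by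
  have hmid : Matched M p.2.1 ∧ Matched M p.2.2.1 :=
    ⟨⟨_, hp.2.2.2.1, Sym2.mem_mk_left _ _⟩, ⟨_, hp.2.2.2.1, Sym2.mem_mk_right _ _⟩⟩
  simp only [pathVerts, mem_insert, mem_singleton]
  constructor
  · rintro ⟨rfl | rfl | rfl | rfl, hvm⟩
    exacts [.inl rfl, absurd hmid.1 hvm, absurd hmid.2 hvm, .inr rfl]
  · rintro (rfl | rfl)
    exacts [⟨.inl rfl, hp.2.1⟩, ⟨.inr (.inr (.inr rfl)), hp.2.2.1⟩]

open Classical in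
noncomputable def outerEndIn (L : Set V) (p : V × V × V × V) : V :=
  if p.1 ∈ L then p.1 else p.2.2.2

open Classical in
noncomputable def outerEndOut (L : Set V) (p : V × V × V × V) : V :=
  if p.1 ∈ L then p.2.2.2 else p.1

variable {L : Set V}

lemma outerEndIn_mem (h : p.1 ∈ L ↔ p.2.2.2 ∉ L) : outerEndIn L p ∈ L := by
  unfold outerEndIn; split_ifs with h1 <;> tauto

lemma outerEndOut_not_mem (h : p.1 ∈ L ↔ p.2.2.2 ∉ L) : outerEndOut L p ∉ L := by
  unfold outerEndOut; split_ifs with h1 <;> tauto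

lemma outerEndIn_eq_or : outerEndIn L p = p.1 ∨ outerEndIn L p = p.2.2.2 := by
  unfold outerEndIn; split_ifs <;> simp

lemma outerEndOut_eq_or : outerEndOut L p = p.1 ∨ outerEndOut L p = p.2.2.2 := by
  unfold outerEndOut; split_ifs <;> simp

lemma eq_outerEndIn_or_eq_outerEndOut {v : V} (hv : v = p.1 ∨ v = p.2.2.2) :
    v = outerEndIn L p ∨ v = outerEndOut L p := by
  unfold outerEndIn outerEndOut; split_ifs <;> tauto

variable [DecidableEq V] {P : Finset (V × V × V × V)}

lemma card_filter_eq_le_of_not_matched {b : ℕ}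
    (hunmatched : ∀ v : V, ¬ Matched M v → #{p ∈ P | v ∈ pathVerts p} ≤ b)
    (f : V × V × V × V → V) (hf : ∀ p ∈ P, f p ∈ pathVerts p ∧ ¬ Matched M (f p)) (w : V) :
    #{p ∈ P | f p = w} ≤ b := by
  obtain hw | ⟨p, hp⟩ := (filter (f · = w) P).eq_empty_or_nonempty
  · simp [hw]
  obtain ⟨hpP, rfl⟩ := mem_filter.1 hp
  refine (card_le_card fun q hq => ?_).trans (hunmatched _ (hf p hpP).2)
  obtain ⟨hqP, hfq⟩ := mem_filter.1 hq
  exact mem_filter.2 ⟨hqP, hfq ▸ (hf q hqP).1⟩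

lemma pairwiseDisjointPaths_of_injOn (hP : ∀ p ∈ P, IsAugPath3 G M p)
    (hopp : ∀ p ∈ P, p.1 ∈ L ↔ p.2.2.2 ∉ L)
    (hmatched : ∀ v : V, Matched M v → #{p ∈ P | v ∈ pathVerts p} ≤ 1)
    {P' : Finset (V × V × V × V)} (hP' : P' ⊆ P)
    (hin : Set.InjOn (outerEndIn L) P') (hout : Set.InjOn (outerEndOut L) P') :
    PairwiseDisjointPaths P' := by
  intro p hp q hq hpq
  refine disjoint_left.2 fun v hvp hvq => hpq ?_
  by_cases hv : Matched M v
  · exact card_le_one.1 (hmatched v hv) p (mem_filter.2 ⟨hP' hp, hvp⟩) q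
      (mem_filter.2 ⟨hP' hq, hvq⟩)
  have hends : ∀ x ∈ P', v ∈ pathVerts x → v = outerEndIn L x ∨ v = outerEndOut L x :=
    fun x hx hvx => eq_outerEndIn_or_eq_outerEndOut
      ((hP x (hP' hx)).mem_pathVerts_and_not_matched_iff.1 ⟨hvx, hv⟩)
  have hinL : ∀ x ∈ P', outerEndIn L x ∈ L := fun x hx =>
    outerEndIn_mem (hopp x (hP' hx))
  have houtL : ∀ x ∈ P', outerEndOut L x ∉ L := fun x hx =>
    outerEndOut_not_mem (hopp x (hP' hx))
  rcases hends p hp hvp with rfl | rfl <;> rcases hends q hq hvq with hvq' | hvq'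
  · exact hin hp hq hvq'
  · exact absurd (hinL p hp) (hvq' ▸ houtL q hq)
  · exact absurd (hinL q hq) (hvq' ▸ houtL p hp)
  · exact hout hp hq hvq'

end AugPaths

theorem disjointify_aug_paths_general [DecidableEq V]
    (G : SimpleGraph V) (M₁ : Finset (Sym2 V))
    (b : ℕ)
    (P : Finset (V × V × V × V)) (hP : ∀ p ∈ P, IsAugPath3 G M₁ p)
    (L : Set V)
    (hopp : ∀ p ∈ P, p.1 ∈ L ↔ p.2.2.2 ∉ L)
    (hmatched : ∀ v : V, Matched M₁ v →
      (P.filter (fun p => v ∈ pathVerts p)).card ≤ 1)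
    (hunmatched : ∀ v : V, ¬ Matched M₁ v →
      (P.filter (fun p => v ∈ pathVerts p)).card ≤ b) :
    ∃ P' : Finset (V × V × V × V), P' ⊆ P ∧ PairwiseDisjointPaths P' ∧
      (P.card : ℝ) / b ≤ (P'.card : ℝ) := by
  have hfiber (f : V × V × V × V → V) (hf : ∀ p, f p = p.1 ∨ f p = p.2.2.2) (w : V) :
      #{p ∈ P | f p = w} ≤ b :=
    card_filter_eq_le_of_not_matched hunmatched f
      (fun p hp => (hP p hp).mem_pathVerts_and_not_matched_iff.2 (hf p)) w
  obtain ⟨P', hP', hin, hout, hcard⟩ :=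
    exists_subset_injOn_injOn_of_fiber_card_le P (outerEndIn L) (outerEndOut L) b
      (hfiber _ fun _ => outerEndIn_eq_or) (hfiber _ fun _ => outerEndOut_eq_or)
  refine ⟨P', hP', pairwiseDisjointPaths_of_injOn hP hopp hmatched hP' hin hout, ?_⟩
  exact div_le_of_le_mul₀ b.cast_nonneg P'.card.cast_nonneg
    (by rw [mul_comm]; exact_mod_cast hcard)

theorem disjointify_aug_paths [Fintype V] [DecidableEq V]
    (G : SimpleGraph V) (M₁ : Finset (Sym2 V)) (hM₁ : IsMatching G M₁)
    (b : ℕ) (hb : 0 < b)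
    (P : Finset (V × V × V × V)) (hP : ∀ p ∈ P, IsAugPath3 G M₁ p)
    (L : Set V)
    (hopp : ∀ p ∈ P, p.1 ∈ L ↔ p.2.2.2 ∉ L)
    (hmatched : ∀ v : V, Matched M₁ v →
      (P.filter (fun p => v ∈ pathVerts p)).card ≤ 1)
    (hunmatched : ∀ v : V, ¬ Matched M₁ v →
      (P.filter (fun p => v ∈ pathVerts p)).card ≤ b) :
    ∃ P' : Finset (V × V × V × V), P' ⊆ P ∧ PairwiseDisjointPaths P' ∧
      (P.card : ℝ) / b ≤ (P'.card : ℝ) :=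
  disjointify_aug_paths_general G M₁ b P hP L hopp hmatched hunmatched
end

section
/- Let K = (V, E_K) be an (ε, d)-kernel of a graph G with ε ≤ 1/4, and let H_K = {v : d_K(v) ≥ d(1−ε)} be the set of high-degree vertices of K. Then |H_K| ≤ 4·μ(G). -/
variable {V : Type*}

/-- `K` is an `(ε, d)`-kernel of `G`: a subgraph of maximum degree at most `d`
such that every non-kernel edge of `G` has an endpoint of degree at least `d(1-ε)` in `K`. -/
def IsKernel [Fintype V] [DecidableEq V] (G K : SimpleGraph V) [DecidableRel K.Adj]
    (ε : ℝ) (d : ℕ) : Prop :=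
  K ≤ G ∧ (∀ v : V, K.degree v ≤ d) ∧
    ∀ e ∈ G.edgeSet, e ∉ K.edgeSet → ∃ v : V, v ∈ e ∧ (d : ℝ) * (1 - ε) ≤ (K.degree v : ℝ)

/-!
Fix a maximum matching `M`. High-degree vertices covered by `M` number at most `2|M|`. An
uncovered vertex `u` has all its `K`-neighbours covered, by maximality. For an edge `ab ∈ M`,
the `K`-edges from uncovered vertices to `{a, b}` form a star, since `u ~ a`, `u' ~ b` with
`u ≠ u'` would be an augmenting path; so there are at most `d` of them. Hence the `U` uncovered
high-degree vertices satisfy `|U| d (1 - ε) ≤ d |M|`, i.e. `|U| ≤ 4|M|/3`, and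
`|H| ≤ (2 + 4/3) |M| ≤ 4 μ(G)`.
-/

open Finset

def IsMaximumMatching (G : SimpleGraph V) (M : Finset (Sym2 V)) : Prop :=
  IsMatching G M ∧ ∀ M', IsMatching G M' → M'.card ≤ M.card

section Matching

variable {G : SimpleGraph V} {M M' : Finset (Sym2 V)}

lemma Matched.mono {v : V} (h : M ⊆ M') (hv : Matched M v) : Matched M' v :=
  let ⟨e, he, hve⟩ := hv
  ⟨e, h he, hve⟩

lemma matched_insert_iff [DecidableEq V] {x y v : V} :
    Matched (insert s(x, y) M) v ↔ v = x ∨ v = y ∨ Matched M v := by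
  simp [Matched, or_assoc]

lemma notMem_of_not_matched {x y : V} (hx : ¬ Matched M x) : s(x, y) ∉ M :=
  fun h => hx ⟨_, h, Sym2.mem_mk_left x y⟩

lemma card_filter_matched_le [DecidablePred (Matched M)] (S : Finset V) : #{v ∈ S | Matched M v} ≤ 2 * #M := by
  classical
  calc #{v ∈ S | Matched M v} ≤ #(M.biUnion Sym2.toFinset) := by
        refine card_le_card fun v hv => ?_
        obtain ⟨e, he, hve⟩ := (mem_filter.1 hv).2
        exact mem_biUnion.2 ⟨e, he, Sym2.mem_toFinset.2 hve⟩
    _ ≤ #M * 2 := card_biUnion_le_card_mul _ _ _ fun e _ => by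
        rw [Sym2.card_toFinset]; split_ifs <;> omega
    _ = 2 * #M := mul_comm _ _

lemma IsMatching.subset (h : IsMatching G M) (hs : M' ⊆ M) : IsMatching G M' :=
  ⟨fun e he => h.1 e (hs he), fun e he f hf => h.2 e (hs he) f (hs hf)⟩

lemma IsMatching.insert [DecidableEq V] (h : IsMatching G M) {x y : V} (hxy : G.Adj x y)
    (hx : ¬ Matched M x) (hy : ¬ Matched M y) : IsMatching G (insert s(x, y) M) := by
  refine ⟨fun e he => ?_, fun e he f hf hne v hve hvf => ?_⟩
  · rcases mem_insert.1 he with rfl | he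
    exacts [hxy, h.1 e he]
  rcases mem_insert.1 he with rfl | heM <;> rcases mem_insert.1 hf with rfl | hfM
  · exact hne rfl
  · rcases Sym2.mem_iff.1 hve with rfl | rfl
    exacts [hx ⟨f, hfM, hvf⟩, hy ⟨f, hfM, hvf⟩]
  · rcases Sym2.mem_iff.1 hvf with rfl | rfl
    exacts [hx ⟨e, heM, hve⟩, hy ⟨e, heM, hve⟩]
  · exact h.2 e heM f hfM hne v hve hvf

lemma IsMatching.not_matched_erase [DecidableEq V] (h : IsMatching G M) {e : Sym2 V}
    (he : e ∈ M) {v : V} (hv : v ∈ e) : ¬ Matched (M.erase e) v := by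
  rintro ⟨f, hf, hvf⟩
  obtain ⟨hfe, hfM⟩ := mem_erase.1 hf
  exact h.2 f hfM e he hfe v hvf hv

lemma exists_isMaximumMatching_card_eq [Fintype V] (G : SimpleGraph V) :
    ∃ M, IsMaximumMatching G M ∧ M.card = matchNum G := by
  classical
  set sizes := {n | ∃ M : Finset (Sym2 V), IsMatching G M ∧ M.card = n}
  have hbdd : BddAbove sizes := ⟨Fintype.card (Sym2 V), by
    rintro n ⟨M, -, rfl⟩
    exact card_le_univ M⟩
  obtain ⟨M, hM, hcard⟩ : matchNum G ∈ sizes :=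
    Nat.sSup_mem ⟨0, ∅, ⟨by simp, by simp⟩, rfl⟩ hbdd
  exact ⟨M, ⟨hM, fun M' hM' => hcard ▸ le_csSup hbdd ⟨M', hM', rfl⟩⟩, hcard⟩

lemma IsMaximumMatching.matched_of_adj [DecidableEq V] (hM : IsMaximumMatching G M) {u w : V}
    (huw : G.Adj u w) (hu : ¬ Matched M u) : Matched M w := by
  by_contra hw
  have := hM.2 _ (hM.1.insert huw hu hw)
  rw [card_insert_of_notMem (notMem_of_not_matched hu)] at this
  omega

/-- A maximum matching has no augmenting path `u - a = b - u'` of length three. -/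
lemma IsMaximumMatching.eq_of_adj_of_adj [DecidableEq V] (hM : IsMaximumMatching G M)
    {a b u u' : V} (hab : s(a, b) ∈ M) (hu : ¬ Matched M u) (hu' : ¬ Matched M u')
    (hua : G.Adj u a) (hu'b : G.Adj u' b) : u = u' := by
  by_contra huu'
  have ha : Matched M a := ⟨_, hab, Sym2.mem_mk_left a b⟩
  have hb : Matched M b := ⟨_, hab, Sym2.mem_mk_right a b⟩
  have hab' : a ≠ b := (hM.1.1 _ hab).ne
  set M₀ := M.erase s(a, b)
  have hM₀ : IsMatching G M₀ := hM.1.subset (erase_subset _ _)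
  have hu₀ : ¬ Matched M₀ u := fun h => hu (h.mono (erase_subset _ _))
  have hu'₀ : ¬ Matched M₀ u' := fun h => hu' (h.mono (erase_subset _ _))
  have ha₀ := hM.1.not_matched_erase hab (Sym2.mem_mk_left a b)
  have hb₀ := hM.1.not_matched_erase hab (Sym2.mem_mk_right a b)
  set M₁ := insert s(u', b) M₀
  have hM₁ : IsMatching G M₁ := hM₀.insert hu'b hu'₀ hb₀
  have hu₁ : ¬ Matched M₁ u := by
    rw [matched_insert_iff]
    rintro (h | rfl | h)
    exacts [huu' h, hu hb, hu₀ h]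
  have ha₁ : ¬ Matched M₁ a := by
    rw [matched_insert_iff]
    rintro (rfl | h | h)
    exacts [hu' ha, hab' h, ha₀ h]
  have hcard := hM.2 _ (hM₁.insert hua hu₁ ha₁)
  rw [card_insert_of_notMem (notMem_of_not_matched hu₁),
    card_insert_of_notMem (notMem_of_not_matched hu'₀), card_erase_of_mem hab] at hcard
  have : 0 < #M := card_pos.2 ⟨_, hab⟩
  omega

lemma IsMaximumMatching.exists_star [DecidableEq V] (hM : IsMaximumMatching G M) {a b : V}
    (hab : s(a, b) ∈ M) (F : Finset ((_ : V) × V))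
    (hF : ∀ p ∈ F, ¬ Matched M p.1 ∧ G.Adj p.1 p.2 ∧ (p.2 = a ∨ p.2 = b)) :
    ∃ w, (∀ p ∈ F, p.1 = w) ∨ (∀ p ∈ F, p.2 = w) := by
  by_cases hA : ∀ p ∈ F, p.2 = a
  · exact ⟨a, Or.inr hA⟩
  by_cases hB : ∀ p ∈ F, p.2 = b
  · exact ⟨b, Or.inr hB⟩
  push Not at hA hB
  obtain ⟨q, hqF, hqa⟩ := hA
  obtain ⟨r, hrF, hrb⟩ := hB
  have hqb : q.2 = b := ((hF q hqF).2.2).resolve_left hqa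
  have hra : r.2 = a := ((hF r hrF).2.2).resolve_right hrb
  have augment : ∀ p ∈ F, ∀ p' ∈ F, p.2 = a → p'.2 = b → p.1 = p'.1 := by
    intro p hp p' hp' hpa hp'b
    obtain ⟨hp1, hpadj, -⟩ := hF p hp
    obtain ⟨hp'1, hp'adj, -⟩ := hF p' hp'
    exact hM.eq_of_adj_of_adj hab hp1 hp'1 (hpa ▸ hpadj) (hp'b ▸ hp'adj)
  refine ⟨r.1, Or.inl fun p hp => ?_⟩
  rcases (hF p hp).2.2 with hpa | hpb
  · exact (augment p hp q hqF hpa hqb).trans (augment r hrF q hqF hra hqb).symm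
  · exact (augment r hrF p hp hra hpb).symm

lemma IsMaximumMatching.sum_degree_le_mul_card [Fintype V] [DecidableEq V] (hM : IsMaximumMatching G M)
    {K : SimpleGraph V} [DecidableRel K.Adj] (hKG : K ≤ G) {d : ℕ} (hKd : ∀ v, K.degree v ≤ d)
    {U : Finset V} (hU : ∀ u ∈ U, ¬ Matched M u) : ∑ u ∈ U, K.degree u ≤ d * #M := by
  set P := U.sigma fun u => K.neighborFinset u
  have hP : ∀ p ∈ P, p.1 ∈ U ∧ K.Adj p.1 p.2 := fun p hp => by simpa [P] using hp
  have star_card_le : ∀ e ∈ M, #{p ∈ P | p.2 ∈ e} ≤ d := by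
    intro e he
    induction e using Sym2.ind with
    | _ a b =>
    obtain ⟨w, hw | hw⟩ := hM.exists_star he {p ∈ P | p.2 ∈ s(a, b)} fun p hp => by
      obtain ⟨hpP, hpe⟩ := mem_filter.1 hp
      exact ⟨hU _ (hP p hpP).1, hKG (hP p hpP).2, Sym2.mem_iff.1 hpe⟩
    · calc _ ≤ #(({w} : Finset V).sigma fun u => K.neighborFinset u) := card_le_card fun p hp => by
            have := hP p (mem_filter.1 hp).1
            simpa [hw p hp] using this.2
        _ ≤ d := by simpa using hKd w
    · calc _ ≤ #((K.neighborFinset w).sigma fun _ => ({w} : Finset V)) :=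
            card_le_card fun p hp => by
              have := hP p (mem_filter.1 hp).1
              simpa [hw p hp] using this.2.symm
        _ ≤ d := by simpa using hKd w
  calc ∑ u ∈ U, K.degree u = #P := (card_sigma _ _).symm
    _ ≤ #(M.biUnion fun e => {p ∈ P | p.2 ∈ e}) := card_le_card fun p hp => by
        obtain ⟨e, he, hpe⟩ :=
          hM.matched_of_adj (hKG (hP p hp).2) (hU _ (hP p hp).1)
        exact mem_biUnion.2 ⟨e, he, mem_filter.2 ⟨hp, hpe⟩⟩
    _ ≤ #M * d := card_biUnion_le_card_mul _ _ _ star_card_le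
    _ = d * #M := mul_comm _ _

end Matching

theorem few_high_degree_kernel_vertices [Fintype V] [DecidableEq V]
    (G K : SimpleGraph V) [DecidableRel K.Adj]
    (ε : ℝ) (d : ℕ) (hd : 0 < d) (hε : ε ≤ 1/4)
    (hker : IsKernel G K ε d)
    (H : Finset V) (hH : ∀ v : V, v ∈ H ↔ (d : ℝ) * (1 - ε) ≤ (K.degree v : ℝ)) :
    (H.card : ℝ) ≤ 4 * matchNum G := by
  classical
  obtain ⟨M, hM, hMcard⟩ := exists_isMaximumMatching_card_eq G
  obtain ⟨hKG, hKd, -⟩ := hker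
  set U := {v ∈ H | ¬ Matched M v}
  have hcovered : (#{v ∈ H | Matched M v} : ℝ) ≤ 2 * #M := by
    exact_mod_cast card_filter_matched_le H
  have hdegree : (#U : ℝ) * (d * (1 - ε)) ≤ d * #M := calc
    (#U : ℝ) * (d * (1 - ε)) ≤ ∑ u ∈ U, (K.degree u : ℝ) := by
      simpa using card_nsmul_le_sum U (fun u => (K.degree u : ℝ)) _
        fun u hu => (hH u).1 (mem_filter.1 hu).1
    _ ≤ d * #M := by
      exact_mod_cast hM.sum_degree_le_mul_card hKG hKd fun u hu => (mem_filter.1 hu).2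
  have huncovered : (#U : ℝ) * (1 - ε) ≤ #M :=
    le_of_mul_le_mul_left (by linarith) (by exact_mod_cast hd : (0 : ℝ) < d)
  rw [← card_filter_add_card_filter_not (Matched M), ← hMcard]
  push_cast
  linarith [mul_le_mul_of_nonneg_left hε (#U).cast_nonneg (α := ℝ)]
end
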